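/- If X ⊆ ℝⁿ is amenable at x̄ ∈ X (there is an open neighborhood V of x̄, a C¹ map F : V → ℝᵐ, and a closed convex set D ⊆ ℝᵐ with X ∩ V = {x ∈ V : F(x) ∈ D} and N_D(F(x̄)) ∩ ker(∇F(x̄)*) = {0}), then X is nearly convex at x̄: dist(y, x + T_X(x)) = o(‖x−y‖) as x, y → x̄ in X. -/

import Mathlib

open Filter Topology Metric Set

/-- The Bouligand (contingent) tangent cone to `X` at `x`:
limits of `tᵣ⁻¹ • (xᵣ − x)` with `tᵣ ↓ 0`, `xᵣ → x`, `xᵣ ∈ X`. -/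
def bouligandCone {n : ℕ} (X : Set (EuclideanSpace ℝ (Fin n)))
    (x : EuclideanSpace ℝ (Fin n)) : Set (EuclideanSpace ℝ (Fin n)) :=
  {v | ∃ (t : ℕ → ℝ) (y : ℕ → EuclideanSpace ℝ (Fin n)),
    (∀ k, 0 < t k) ∧ Tendsto t atTop (𝓝 0) ∧ (∀ k, y k ∈ X) ∧
    Tendsto y atTop (𝓝 x) ∧
    Tendsto (fun k => (t k)⁻¹ • (y k - x)) atTop (𝓝 v)}

/-- `X` is nearly radial at `xb ∈ X`: `dist(xb, x + T_X(x)) → 0` as `x → xb` in `X`. -/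
def NearlyRadialAt {n : ℕ} (X : Set (EuclideanSpace ℝ (Fin n)))
    (xb : EuclideanSpace ℝ (Fin n)) : Prop :=
  Tendsto (fun x => Metric.infDist xb ((fun v => x + v) '' bouligandCone X x))
    (𝓝[X] xb) (𝓝 0)

/-- `X` is nearly convex at `xb ∈ X`: `dist(y, x + T_X(x)) = o(‖x − y‖)` as `x, y → xb` in `X`. -/
def NearlyConvexAt {n : ℕ} (X : Set (EuclideanSpace ℝ (Fin n)))
    (xb : EuclideanSpace ℝ (Fin n)) : Prop :=
  ∀ ε > (0 : ℝ), ∃ δ > (0 : ℝ), ∀ x ∈ X, ∀ y ∈ X, ‖x - xb‖ < δ → ‖y - xb‖ < δ →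
    Metric.infDist y ((fun v => x + v) '' bouligandCone X x) ≤ ε * ‖x - y‖

open scoped RealInnerProductSpace

/-- The (convex) normal cone to a set `D` at a point `u`. -/
def convexNormalCone {m : ℕ} (D : Set (EuclideanSpace ℝ (Fin m)))
    (u : EuclideanSpace ℝ (Fin m)) : Set (EuclideanSpace ℝ (Fin m)) :=
  {v | ∀ d ∈ D, ⟪v, d - u⟫ ≤ 0}

/-!
The constraint qualification at `F xb` persists, by compactness of the unit sphere, as a uniform
bound `c ‖v‖ ≤ ‖A† v‖` for normals `v` to `D` at all points near `F xb`, where `A = ∇F(xb)`.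
With it, the projected Gauss–Newton step `x ↦ x - M⁻² A† (F x - proj_D (F x))` (for `M ≥ ‖A‖, c`)
moves by at most `dist(F x, D) / M` and shrinks `dist(F x, D)` by the factor `1 - c² / (4M²)`,
so its iterates converge to a point of `X` within `κ · dist(F x, D)` of the start: a local
error bound.

For `x, y ∈ X` near `xb`, convexity of `D` and strict differentiability of `F` give
`dist(F(x + t(y - x)), D) = o(t ‖y - x‖)`, so the error bound puts points of `X` within
`o(t ‖y - x‖)` of `x + t (y - x)`. Rescaling by `t⁻¹` and letting `t → 0` yields a tangent
vector within `o(‖y - x‖)` of `y - x`.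
-/

open scoped NNReal
open ContinuousLinearMap

section NormalCone

variable {m : ℕ} {D : Set (EuclideanSpace ℝ (Fin m))}

theorem smul_mem_convexNormalCone {u v : EuclideanSpace ℝ (Fin m)}
    (hv : v ∈ convexNormalCone D u) {t : ℝ} (ht : 0 ≤ t) :
    t • v ∈ convexNormalCone D u := fun d hd => by
  rw [real_inner_smul_left]
  exact mul_nonpos_of_nonneg_of_nonpos ht (hv d hd)

theorem exists_pos_mul_norm_le_of_convexNormalCone {E : Type*} [NormedAddCommGroup E]
    [NormedSpace ℝ E] {u₀ : EuclideanSpace ℝ (Fin m)}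
    (L : EuclideanSpace ℝ (Fin m) →L[ℝ] E) (hL : ∀ v ∈ convexNormalCone D u₀, L v = 0 → v = 0) :
    ∃ c > 0, ∀ p, dist p u₀ ≤ c → ∀ v ∈ convexNormalCone D p, c * ‖v‖ ≤ ‖L v‖ := by
  -- On this compact set `dist p u₀ + ‖L w‖` cannot vanish, by the hypothesis at `u₀`.
  set K := (closedBall u₀ 1 ×ˢ sphere 0 1) ∩ {q | q.2 ∈ convexNormalCone D q.1}
  have hK : IsCompact K := by
    refine ((isCompact_closedBall u₀ 1).prod (isCompact_sphere 0 1)).inter_right ?_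
    have hN : {q : EuclideanSpace ℝ (Fin m) × EuclideanSpace ℝ (Fin m) |
        q.2 ∈ convexNormalCone D q.1} = ⋂ d ∈ D, {q | ⟪q.2, d - q.1⟫ ≤ 0} := by
      ext; simp [convexNormalCone]
    rw [hN]
    exact isClosed_biInter fun d _ => isClosed_le (by fun_prop) continuous_const
  have hpos : ∀ q ∈ K, 0 < dist q.1 u₀ + ‖L q.2‖ := by
    rintro ⟨p, v⟩ ⟨⟨-, hv⟩, hN⟩
    by_contra! h
    have hp : p = u₀ := dist_le_zero.1 (by linarith [norm_nonneg (L v)])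
    have hLv : L v = 0 := norm_le_zero_iff.1 (by linarith [dist_nonneg (x := p) (y := u₀)])
    subst hp
    simp [hL v hN hLv] at hv
  obtain ⟨a, ha, hKa⟩ := hK.exists_forall_le' (by fun_prop) hpos
  refine ⟨min 1 (a / 2), by positivity, fun p hp v hv => ?_⟩
  rcases eq_or_ne v 0 with rfl | hv0
  · simp
  have hq : (p, ‖v‖⁻¹ • v) ∈ K :=
    ⟨⟨hp.trans (min_le_left _ _), by simp [norm_smul, hv0]⟩,
      smul_mem_convexNormalCone hv (by positivity)⟩
  have hv' : 0 < ‖v‖ := norm_pos_iff.2 hv0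
  have h := hKa _ hq
  rw [map_smul, norm_smul, norm_inv, norm_norm, ← div_eq_inv_mul] at h
  have hdiv : a / 2 ≤ ‖L v‖ / ‖v‖ := by linarith [hp.trans (min_le_right _ _)]
  exact (mul_le_mul_of_nonneg_right (min_le_right _ _) hv'.le).trans ((le_div_iff₀ hv').1 hdiv)

theorem exists_norm_eq_infDist_of_isClosed_convex (hD : IsClosed D) (hDc : Convex ℝ D)
    (hDne : D.Nonempty) (u : EuclideanSpace ℝ (Fin m)) :
    ∃ p ∈ D, ‖u - p‖ = infDist u D ∧ u - p ∈ convexNormalCone D p := by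
  obtain ⟨p, hpD, hp⟩ := exists_norm_eq_iInf_of_complete_convex hDne hD.isComplete hDc u
  refine ⟨p, hpD, ?_, (norm_eq_iInf_iff_real_inner_le_zero hDc hpD).1 hp⟩
  rw [hp, infDist_eq_iInf]
  simp only [dist_eq_norm]

end NormalCone

theorem exists_le_zero_of_iterate_contracts {X : Type*} [MetricSpace X] [CompleteSpace X]
    {T : X → X} {g : X → ℝ} {x₀ : X} {L θ R : ℝ} (hL : 0 ≤ L) (hθ₀ : 0 ≤ θ) (hθ₁ : θ < 1)
    (hg₀ : 0 ≤ g x₀) (hR : L * g x₀ ≤ (1 - θ) * R) (hg : ContinuousOn g (closedBall x₀ R))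
    (hT : ∀ x ∈ closedBall x₀ R, dist (T x) x ≤ L * g x)
    (hgT : ∀ x ∈ closedBall x₀ R, T x ∈ closedBall x₀ R → g (T x) ≤ θ * g x) :
    ∃ z ∈ closedBall x₀ R, g z ≤ 0 := by
  set x : ℕ → X := fun k => T^[k] x₀
  have hx_succ (k : ℕ) : x (k + 1) = T (x k) := Function.iterate_succ_apply' T k x₀
  have hR₀ : 0 ≤ R := nonneg_of_mul_nonneg_right ((mul_nonneg hL hg₀).trans hR) (by linarith)
  have hmem {k : ℕ} (h : dist (x k) x₀ ≤ (1 - θ ^ k) * R) : x k ∈ closedBall x₀ R :=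
    mem_closedBall.2 (h.trans (by nlinarith [pow_nonneg hθ₀ k]))
  have hstep {k : ℕ} (hk : x k ∈ closedBall x₀ R) (hgk : g (x k) ≤ θ ^ k * g x₀) :
      dist (x (k + 1)) (x k) ≤ (1 - θ) * R * θ ^ k :=
    calc dist (x (k + 1)) (x k) ≤ L * g (x k) := hx_succ k ▸ hT _ hk
      _ ≤ L * (θ ^ k * g x₀) := by gcongr
      _ ≤ (1 - θ) * R * θ ^ k := by nlinarith [pow_nonneg hθ₀ k]
  have key (k : ℕ) : dist (x k) x₀ ≤ (1 - θ ^ k) * R ∧ g (x k) ≤ θ ^ k * g x₀ := by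
    induction k with
    | zero => simp [x]
    | succ k ih =>
      have hdist : dist (x (k + 1)) x₀ ≤ (1 - θ ^ (k + 1)) * R := by
        calc dist (x (k + 1)) x₀ ≤ dist (x (k + 1)) (x k) + dist (x k) x₀ := dist_triangle _ _ _
          _ ≤ (1 - θ) * R * θ ^ k + (1 - θ ^ k) * R := add_le_add (hstep (hmem ih.1) ih.2) ih.1
          _ = (1 - θ ^ (k + 1)) * R := by ring
      refine ⟨hdist, ?_⟩
      calc g (x (k + 1)) ≤ θ * g (x k) := by
            rw [hx_succ]; exact hgT _ (hmem ih.1) (hx_succ k ▸ hmem hdist)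
        _ ≤ θ ^ (k + 1) * g x₀ := by
            rw [pow_succ', mul_assoc]; exact mul_le_mul_of_nonneg_left ih.2 hθ₀
  have hx_mem (k : ℕ) : x k ∈ closedBall x₀ R := hmem (key k).1
  have hcauchy : CauchySeq x := cauchySeq_of_le_geometric θ ((1 - θ) * R) hθ₁ fun k => by
    rw [dist_comm]; exact hstep (hx_mem k) (key k).2
  obtain ⟨z, hz⟩ := cauchySeq_tendsto_of_complete hcauchy
  have hz_mem : z ∈ closedBall x₀ R := isClosed_closedBall.mem_of_tendsto hz (.of_forall hx_mem)
  have hgx : Tendsto (fun k => g (x k)) atTop (𝓝 (g z)) :=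
    (hg z hz_mem).tendsto.comp (tendsto_nhdsWithin_iff.2 ⟨hz, .of_forall hx_mem⟩)
  have hbound : Tendsto (fun k => θ ^ k * g x₀) atTop (𝓝 0) := by
    simpa using (tendsto_pow_atTop_nhds_zero_of_lt_one hθ₀ hθ₁).mul_const (g x₀)
  exact ⟨z, hz_mem, le_of_tendsto_of_tendsto' hgx hbound fun k => (key k).2⟩

section ErrorBound

variable {E G : Type*} [NormedAddCommGroup E] [InnerProductSpace ℝ E] [CompleteSpace E]
  [NormedAddCommGroup G] [InnerProductSpace ℝ G] [CompleteSpace G]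

theorem norm_sub_smul_apply_adjoint_le (A : E →L[ℝ] G) {M c : ℝ} (hM : 0 < M) (hAM : ‖A‖ ≤ M)
    (hc : 0 ≤ c) (hcM : c ≤ M) {u : G} (hu : c * ‖u‖ ≤ ‖adjoint A u‖) :
    ‖u - (M ^ 2)⁻¹ • A (adjoint A u)‖ ≤ (1 - c ^ 2 / (2 * M ^ 2)) * ‖u‖ := by
  set w := adjoint A u
  have hinner : ⟪u, A w⟫ = ‖w‖ ^ 2 := by
    rw [← adjoint_inner_left, real_inner_self_eq_norm_sq]
  have hAw : ‖A w‖ ≤ M * ‖w‖ := (A.le_opNorm w).trans (by gcongr)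
  have hM2 : (M ^ 2)⁻¹ * M ^ 2 = 1 := inv_mul_cancel₀ (by positivity)
  set s := c ^ 2 / M ^ 2
  have hs : s ≤ 1 := (div_le_one (by positivity)).2 (by gcongr)
  have hsq : ‖u - (M ^ 2)⁻¹ • A w‖ ^ 2 ≤ (1 - s) * ‖u‖ ^ 2 :=
    calc ‖u - (M ^ 2)⁻¹ • A w‖ ^ 2
        = ‖u‖ ^ 2 - 2 * (M ^ 2)⁻¹ * ‖w‖ ^ 2 + ((M ^ 2)⁻¹) ^ 2 * ‖A w‖ ^ 2 := by
          rw [norm_sub_sq_real, inner_smul_right, hinner, norm_smul,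
            Real.norm_of_nonneg (by positivity)]
          ring
      _ ≤ ‖u‖ ^ 2 - 2 * (M ^ 2)⁻¹ * ‖w‖ ^ 2 + ((M ^ 2)⁻¹) ^ 2 * (M ^ 2 * ‖w‖ ^ 2) := by
          gcongr
          simpa [mul_pow] using pow_le_pow_left₀ (norm_nonneg _) hAw 2
      _ = ‖u‖ ^ 2 - (M ^ 2)⁻¹ * ‖w‖ ^ 2 := by linear_combination (M ^ 2)⁻¹ * ‖w‖ ^ 2 * hM2
      _ ≤ ‖u‖ ^ 2 - (M ^ 2)⁻¹ * (c ^ 2 * ‖u‖ ^ 2) := by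
          gcongr
          simpa [mul_pow] using pow_le_pow_left₀ (by positivity) hu 2
      _ = (1 - s) * ‖u‖ ^ 2 := by ring
  have hs2 : c ^ 2 / (2 * M ^ 2) = s / 2 := by ring
  rw [hs2]
  refine (pow_le_pow_iff_left₀ (norm_nonneg _) (by nlinarith [norm_nonneg u]) two_ne_zero).1 ?_
  calc _ ≤ (1 - s) * ‖u‖ ^ 2 := hsq
    _ ≤ ((1 - s / 2) * ‖u‖) ^ 2 := by rw [mul_pow]; gcongr; nlinarith [sq_nonneg s]

theorem norm_smul_adjoint_le {A : E →L[ℝ] G} {M : ℝ} (hM : 0 < M) (hAM : ‖A‖ ≤ M) (u : G) :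
    ‖(M ^ 2)⁻¹ • adjoint A u‖ ≤ ‖u‖ / M :=
  calc ‖(M ^ 2)⁻¹ • adjoint A u‖ ≤ (M ^ 2)⁻¹ * (M * ‖u‖) := by
        rw [norm_smul, Real.norm_of_nonneg (by positivity)]
        gcongr
        exact (le_opNorm _ u).trans (by rw [adjoint.norm_map]; gcongr)
    _ = ‖u‖ / M := by field_simp

theorem infDist_apply_sub_smul_adjoint_le {F : E → G} {A : E →L[ℝ] G} {s : Set E} {ε : ℝ≥0}
    (hFA : ApproximatesLinearOn F A s ε) {D : Set G} {M c : ℝ} (hM : 0 < M) (hAM : ‖A‖ ≤ M)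
    (hc : 0 ≤ c) (hcM : c ≤ M) (hε : (ε : ℝ) ≤ c ^ 2 / (4 * M)) {x : E} {p : G} (hp : p ∈ D)
    (hcp : c * ‖F x - p‖ ≤ ‖adjoint A (F x - p)‖) (hx : x ∈ s)
    (hx' : x - (M ^ 2)⁻¹ • adjoint A (F x - p) ∈ s) :
    infDist (F (x - (M ^ 2)⁻¹ • adjoint A (F x - p))) D
      ≤ (1 - c ^ 2 / (4 * M ^ 2)) * ‖F x - p‖ := by
  set u := F x - p
  set x' := x - (M ^ 2)⁻¹ • adjoint A u
  have hstep : ‖x' - x‖ ≤ ‖u‖ / M := by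
    simpa [x', norm_neg] using norm_smul_adjoint_le hM hAM u
  have hsplit : F x' - p = (F x' - F x - A (x' - x)) + (u - (M ^ 2)⁻¹ • A (adjoint A u)) := by
    simp only [x', sub_sub_cancel_left, map_neg, map_smul, u]
    abel
  calc infDist (F x') D ≤ ‖F x' - p‖ := (infDist_le_dist_of_mem hp).trans_eq (dist_eq_norm _ _)
    _ ≤ ε * ‖x' - x‖ + (1 - c ^ 2 / (2 * M ^ 2)) * ‖u‖ := by
        rw [hsplit]
        exact (norm_add_le _ _).trans
          (add_le_add (hFA _ hx' _ hx) (norm_sub_smul_apply_adjoint_le A hM hAM hc hcM hcp))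
    _ ≤ c ^ 2 / (4 * M) * (‖u‖ / M) + (1 - c ^ 2 / (2 * M ^ 2)) * ‖u‖ := by gcongr
    _ = (1 - c ^ 2 / (4 * M ^ 2)) * ‖u‖ := by field_simp; ring

theorem exists_mem_closedBall_apply_mem {m : ℕ} {F : E → EuclideanSpace ℝ (Fin m)}
    {A : E →L[ℝ] EuclideanSpace ℝ (Fin m)} {D : Set (EuclideanSpace ℝ (Fin m))}
    (hD : IsClosed D) (hDc : Convex ℝ D) {u₀ : EuclideanSpace ℝ (Fin m)} (hu₀ : u₀ ∈ D)
    {M c : ℝ} (hAM : ‖A‖ ≤ M) (hc : 0 < c) (hcM : c ≤ M)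
    (hCQ : ∀ p, dist p u₀ ≤ c → ∀ v ∈ convexNormalCone D p, c * ‖v‖ ≤ ‖adjoint A v‖)
    {W : Set E} {ε : ℝ≥0} (hFA : ApproximatesLinearOn F A W ε) (hε : (ε : ℝ) ≤ c ^ 2 / (4 * M))
    (hW : ∀ x ∈ W, 2 * dist (F x) u₀ ≤ c) {x₀ : E}
    (hx₀ : closedBall x₀ (4 * M / c ^ 2 * infDist (F x₀) D) ⊆ W) :
    ∃ z ∈ closedBall x₀ (4 * M / c ^ 2 * infDist (F x₀) D), F z ∈ D := by
  have hM : 0 < M := hc.trans_le hcM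
  choose π hπD hπdist hπN using exists_norm_eq_infDist_of_isClosed_convex hD hDc ⟨u₀, hu₀⟩
  set R := 4 * M / c ^ 2 * infDist (F x₀) D
  set θ := 1 - c ^ 2 / (4 * M ^ 2)
  set T : E → E := fun x => x - (M ^ 2)⁻¹ • adjoint A (F x - π (F x))
  have hCQW (x : E) (hx : x ∈ W) : c * ‖F x - π (F x)‖ ≤ ‖adjoint A (F x - π (F x))‖ := by
    refine hCQ _ ?_ _ (hπN _)
    calc dist (π (F x)) u₀ ≤ dist (π (F x)) (F x) + dist (F x) u₀ := dist_triangle _ _ _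
      _ ≤ dist (F x) u₀ + dist (F x) u₀ := by
          rw [dist_comm, dist_eq_norm, hπdist]; gcongr; exact infDist_le_dist_of_mem hu₀
      _ ≤ c := by linarith [hW x hx]
  have hθ₀ : 0 ≤ θ := by
    have : c ^ 2 / (4 * M ^ 2) ≤ 1 := (div_le_one (by positivity)).2 (by nlinarith)
    linarith
  have hθ₁ : θ < 1 := by
    have : 0 < c ^ 2 / (4 * M ^ 2) := by positivity
    linarith
  have hR : 1 / M * infDist (F x₀) D ≤ (1 - θ) * R :=
    le_of_eq (by simp only [θ, R]; field_simp; ring)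
  have hT (x : E) (_ : x ∈ closedBall x₀ R) : dist (T x) x ≤ 1 / M * infDist (F x) D := by
    rw [dist_eq_norm, sub_sub_cancel_left, norm_neg, ← hπdist, one_div_mul_eq_div]
    exact norm_smul_adjoint_le hM hAM _
  have hgT (x : E) (hx : x ∈ closedBall x₀ R) (hTx : T x ∈ closedBall x₀ R) :
      infDist (F (T x)) D ≤ θ * infDist (F x) D := by
    rw [← hπdist (F x)]
    exact infDist_apply_sub_smul_adjoint_le hFA hM hAM hc.le hcM hε (hπD _) (hCQW x (hx₀ hx))
      (hx₀ hx) (hx₀ hTx)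
  have hg : ContinuousOn (fun x => infDist (F x) D) (closedBall x₀ R) :=
    (continuous_infDist_pt D).comp_continuousOn (hFA.continuousOn.mono hx₀)
  obtain ⟨z, hz, hFz⟩ := exists_le_zero_of_iterate_contracts (T := T) (by positivity) hθ₀ hθ₁
    infDist_nonneg hR hg hT hgT
  exact ⟨z, hz, (hD.mem_iff_infDist_zero ⟨u₀, hu₀⟩).2 (le_antisymm hFz infDist_nonneg)⟩

theorem exists_local_error_bound {m : ℕ} {F : E → EuclideanSpace ℝ (Fin m)}
    {A : E →L[ℝ] EuclideanSpace ℝ (Fin m)} {xb : E} {D : Set (EuclideanSpace ℝ (Fin m))}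
    {X : Set E} (hF : HasStrictFDerivAt F A xb) (hD : IsClosed D) (hDc : Convex ℝ D)
    (hxb : F xb ∈ D) (hCQ : ∀ v ∈ convexNormalCone D (F xb), adjoint A v = 0 → v = 0)
    (hX : ∀ᶠ z in 𝓝 xb, F z ∈ D → z ∈ X) :
    ∃ κ > 0, ∀ᶠ x in 𝓝 xb, ∃ z ∈ X, ‖z - x‖ ≤ κ * infDist (F x) D := by
  obtain ⟨c, hc, hcCQ⟩ := exists_pos_mul_norm_le_of_convexNormalCone (adjoint A) hCQ
  set M := max ‖A‖ c
  have hM : 0 < M := hc.trans_le (le_max_right _ _)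
  set ε : ℝ≥0 := ⟨c ^ 2 / (4 * M), by positivity⟩
  obtain ⟨s, hs, hFA⟩ := hF.approximates_deriv_on_nhds (c := ε)
    (Or.inr (show (0 : ℝ) < c ^ 2 / (4 * M) by positivity))
  have hFc : ∀ᶠ x in 𝓝 xb, dist (F x) (F xb) < c / 2 :=
    hF.continuousAt (ball_mem_nhds _ (half_pos hc))
  obtain ⟨r, hr, hball⟩ := Metric.mem_nhds_iff.1 (inter_mem (inter_mem hs hX) hFc)
  refine ⟨4 * M / c ^ 2, by positivity, ?_⟩
  have hlim : Tendsto (fun x => 4 * M / c ^ 2 * infDist (F x) D + dist x xb) (𝓝 xb) (𝓝 0) := by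
    have : ContinuousAt (fun x => 4 * M / c ^ 2 * infDist (F x) D + dist x xb) xb :=
      ((continuous_const.mul (continuous_infDist_pt D)).continuousAt.comp hF.continuousAt).add
        (continuous_id.dist continuous_const).continuousAt
    simpa [infDist_zero_of_mem hxb] using this.tendsto
  filter_upwards [hlim.eventually (gt_mem_nhds hr)] with x hx
  have hsub : closedBall x (4 * M / c ^ 2 * infDist (F x) D) ⊆ ball xb r := fun y hy =>
    mem_ball.2 (by linarith [dist_triangle y x xb, mem_closedBall.1 hy])
  obtain ⟨z, hz, hFz⟩ := exists_mem_closedBall_apply_mem hD hDc hxb (le_max_left _ _) hc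
    (le_max_right _ _) hcCQ (hFA.mono_set fun y hy => (hball hy).1.1) le_rfl
    (fun y hy => by linarith [(hball hy).2.out]) hsub
  exact ⟨z, (hball (hsub hz)).1.2 hFz, by rw [← dist_eq_norm]; exact hz⟩

end ErrorBound

theorem infDist_apply_add_smul_sub_le {E G : Type*} [NormedAddCommGroup E] [NormedSpace ℝ E]
    [NormedAddCommGroup G] [NormedSpace ℝ G] {F : E → G} {A : E →L[ℝ] G} {s : Set E}
    {ε : ℝ≥0} (hFA : ApproximatesLinearOn F A s ε) {D : Set G} (hDc : Convex ℝ D) {x y : E}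
    (hx : x ∈ s) (hy : y ∈ s) (hxD : F x ∈ D) (hyD : F y ∈ D) {t : ℝ} (ht₀ : 0 ≤ t)
    (ht₁ : t ≤ 1) (hxt : x + t • (y - x) ∈ s) :
    infDist (F (x + t • (y - x))) D ≤ 2 * ε * t * ‖y - x‖ := by
  have hmem : (1 - t) • F x + t • F y ∈ D := hDc hxD hyD (by linarith) ht₀ (by ring)
  have hsplit : F (x + t • (y - x)) - ((1 - t) • F x + t • F y)
      = (F (x + t • (y - x)) - F x - A (x + t • (y - x) - x)) - t • (F y - F x - A (y - x)) := by
    simp only [add_sub_cancel_left, map_smul]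
    module
  calc infDist (F (x + t • (y - x))) D ≤ ‖F (x + t • (y - x)) - ((1 - t) • F x + t • F y)‖ :=
        (infDist_le_dist_of_mem hmem).trans_eq (dist_eq_norm _ _)
    _ ≤ ε * ‖t • (y - x)‖ + t * (ε * ‖y - x‖) := by
        rw [hsplit]
        refine (norm_sub_le _ _).trans (add_le_add ?_ ?_)
        · simpa using hFA _ hxt _ hx
        · rw [norm_smul, Real.norm_of_nonneg ht₀]
          exact mul_le_mul_of_nonneg_left (hFA _ hy _ hx) ht₀
    _ = 2 * ε * t * ‖y - x‖ := by rw [norm_smul, Real.norm_of_nonneg ht₀]; ring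

theorem exists_mem_bouligandCone_norm_sub_le {n : ℕ} {X : Set (EuclideanSpace ℝ (Fin n))}
    {x w : EuclideanSpace ℝ (Fin n)} {η : ℝ} {t : ℕ → ℝ} (ht : ∀ k, 0 < t k)
    (ht₀ : Tendsto t atTop (𝓝 0)) (h : ∀ k, ∃ y ∈ X, ‖y - (x + t k • w)‖ ≤ t k * η) :
    ∃ v ∈ bouligandCone X x, ‖v - w‖ ≤ η := by
  choose y hyX hy using h
  set v : ℕ → EuclideanSpace ℝ (Fin n) := fun k => (t k)⁻¹ • (y k - x)
  have hy_eq (k : ℕ) : y k = x + t k • v k := by simp [v, smul_inv_smul₀ (ht k).ne']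
  have hv (k : ℕ) : v k ∈ closedBall w η := by
    have hvw : v k - w = (t k)⁻¹ • (y k - (x + t k • w)) := by
      rw [sub_add_eq_sub_sub, smul_sub, inv_smul_smul₀ (ht k).ne']
    rw [mem_closedBall, dist_eq_norm, hvw, norm_smul, Real.norm_of_nonneg (inv_nonneg.2 (ht k).le),
      inv_mul_le_iff₀ (ht k)]
    exact hy k
  obtain ⟨v₀, hv₀, φ, hφ, hlim⟩ := (isCompact_closedBall w η).tendsto_subseq hv
  have htφ : Tendsto (t ∘ φ) atTop (𝓝 0) := ht₀.comp hφ.tendsto_atTop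
  have hyφ : Tendsto (y ∘ φ) atTop (𝓝 x) := by
    simpa [Function.comp_def, hy_eq] using tendsto_const_nhds.add (htφ.smul hlim) (a := x)
  exact ⟨v₀, ⟨t ∘ φ, y ∘ φ, fun k => ht _, htφ, fun k => hyX _, hyφ, hlim⟩, hv₀⟩

theorem nearlyConvexAt_of_local_error_bound {n : ℕ} {G : Type*} [NormedAddCommGroup G]
    [NormedSpace ℝ G] {X : Set (EuclideanSpace ℝ (Fin n))} {xb : EuclideanSpace ℝ (Fin n)}
    {F : EuclideanSpace ℝ (Fin n) → G} {A : EuclideanSpace ℝ (Fin n) →L[ℝ] G} {D : Set G}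
    (hF : HasStrictFDerivAt F A xb) (hDc : Convex ℝ D) (hXD : ∀ᶠ x in 𝓝 xb, x ∈ X → F x ∈ D)
    {κ : ℝ} (hκ : 0 < κ) (hκX : ∀ᶠ x in 𝓝 xb, ∃ z ∈ X, ‖z - x‖ ≤ κ * infDist (F x) D) :
    NearlyConvexAt X xb := by
  intro ε hε
  obtain ⟨s, hs, hFA⟩ := hF.approximates_deriv_on_nhds (c := ⟨ε / (2 * κ), by positivity⟩)
    (Or.inr (show (0 : ℝ) < ε / (2 * κ) by positivity))
  obtain ⟨δ, hδ, hball⟩ := Metric.mem_nhds_iff.1 (inter_mem hs (hXD.and hκX))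
  refine ⟨δ, hδ, fun x hx y hy hxδ hyδ => ?_⟩
  rw [← mem_ball_iff_norm] at hxδ hyδ
  have happrox (k : ℕ) :
      ∃ z ∈ X, ‖z - (x + (2 : ℝ)⁻¹ ^ k • (y - x))‖ ≤ (2 : ℝ)⁻¹ ^ k * (ε * ‖y - x‖) := by
    have ht₀ : 0 ≤ (2 : ℝ)⁻¹ ^ k := by positivity
    have ht₁ : (2 : ℝ)⁻¹ ^ k ≤ 1 := pow_le_one₀ (by norm_num) (by norm_num)
    have hseg := (convex_ball xb δ).add_smul_sub_mem hxδ hyδ ⟨ht₀, ht₁⟩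
    obtain ⟨z, hzX, hz⟩ := (hball hseg).2.2
    refine ⟨z, hzX, hz.trans ?_⟩
    calc κ * infDist (F (x + (2 : ℝ)⁻¹ ^ k • (y - x))) D
        ≤ κ * (2 * (ε / (2 * κ)) * (2 : ℝ)⁻¹ ^ k * ‖y - x‖) := by
          gcongr
          exact infDist_apply_add_smul_sub_le hFA hDc (hball hxδ).1 (hball hyδ).1
            ((hball hxδ).2.1 hx) ((hball hyδ).2.1 hy) ht₀ ht₁ (hball hseg).1
      _ = (2 : ℝ)⁻¹ ^ k * (ε * ‖y - x‖) := by field_simp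
  obtain ⟨v, hv, hvw⟩ := exists_mem_bouligandCone_norm_sub_le (fun k => by positivity)
    (tendsto_pow_atTop_nhds_zero_of_lt_one (by norm_num) (by norm_num)) happrox
  calc infDist y ((fun v => x + v) '' bouligandCone X x) ≤ dist y (x + v) :=
        infDist_le_dist_of_mem ⟨v, hv, rfl⟩
    _ = ‖v - (y - x)‖ := by rw [dist_eq_norm, ← norm_neg]; congr 1; abel
    _ ≤ ε * ‖x - y‖ := by rwa [norm_sub_rev x y]

/-- If `X` is amenable at `xb ∈ X` — there are an open neighbourhood `V` of `xb`, a `C¹`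
map `F : V → ℝᵐ` and a closed convex set `D` with `X ∩ V = {x ∈ V : F x ∈ D}` and
`N_D(F xb) ∩ ker(∇F(xb)*) = {0}` — then `X` is nearly convex at `xb`. -/
theorem amenable_nearlyConvexAt {n m : ℕ} (X : Set (EuclideanSpace ℝ (Fin n)))
    (xb : EuclideanSpace ℝ (Fin n)) (hxb : xb ∈ X)
    (V : Set (EuclideanSpace ℝ (Fin n))) (hV : IsOpen V) (hxbV : xb ∈ V)
    (F : EuclideanSpace ℝ (Fin n) → EuclideanSpace ℝ (Fin m))
    (hF : ContDiffOn ℝ 1 F V)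
    (D : Set (EuclideanSpace ℝ (Fin m))) (hD : IsClosed D) (hDconv : Convex ℝ D)
    (hXV : X ∩ V = {x ∈ V | F x ∈ D})
    (hconstraint : ∀ v ∈ convexNormalCone D (F xb),
      ContinuousLinearMap.adjoint (fderiv ℝ F xb) v = 0 → v = 0) :
    NearlyConvexAt X xb := by
  have hloc : ∀ᶠ x in 𝓝 xb, x ∈ X ↔ F x ∈ D := by
    filter_upwards [hV.mem_nhds hxbV] with x hx
    rw [Set.ext_iff] at hXV
    exact ⟨fun h => ((hXV x).1 ⟨h, hx⟩).2, fun h => ((hXV x).2 ⟨hx, h⟩).1⟩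
  have hF' : HasStrictFDerivAt F (fderiv ℝ F xb) xb :=
    (hF.contDiffAt (hV.mem_nhds hxbV)).hasStrictFDerivAt one_ne_zero
  obtain ⟨κ, hκ, hκX⟩ := exists_local_error_bound hF' hD hDconv (hloc.self_of_nhds.1 hxb)
    hconstraint (hloc.mono fun _ h => h.2)
  exact nearlyConvexAt_of_local_error_bound hF' hDconv (hloc.mono fun _ h => h.1) hκ hκX
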